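/- arXiv:2005.12248 — 4 statements merged into one kernel-verified Lean document; each statement's English description precedes it below -/
import Mathlib

section
/- Fix a positive integer n. There is a unique function c_n : {divisors of n} → ℚ satisfying ∑_{d∣n} gcd(t,d)·c_n(d) = n/t for every divisor t of n. -/
/-!
Since `gcd t d = ∑_{e ∣ gcd t d} φ e`, the gcd matrix of a finite set `S` closed under taking
divisors factors as `Zᵀ * diagonal φ * Z` with `Z e t = [e ∣ t]`. Divisibility refines the usual
order, so `Z` is unitriangular and `det (gcd t d)_{t,d ∈ S} = ∏_{e ∈ S} φ e` (H. J. S. Smith).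
This is nonzero, so the system has exactly one solution.
-/

open Finset Matrix

theorem existsUnique_sum_mul_eq_of_isUnit_det {α R : Type*} [DecidableEq α] [CommRing R] {S : Finset α}
    (a : α → α → R) (b : α → R) (h : IsUnit (of fun i j : S => a i j).det) :
    ∃! c : α → R, (∀ d ∉ S, c d = 0) ∧ ∀ t ∈ S, ∑ d ∈ S, a t d * c d = b t := by
  set A : Matrix S S R := of fun i j => a i j
  have sum_eq (c : α → R) (t : S) : ∑ d ∈ S, a t d * c d = (A *ᵥ fun j => c j) t :=
    (sum_coe_sort S _).symm
  let v := A⁻¹ *ᵥ fun t : S => b t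
  refine ⟨fun d => if hd : d ∈ S then v ⟨d, hd⟩ else 0,
    ⟨fun d hd => dif_neg hd, fun t ht => ?_⟩, ?_⟩
  · rw [sum_eq _ ⟨t, ht⟩]
    simp [v, mulVec_mulVec, mul_nonsing_inv _ h]
  · rintro c ⟨hc0, hc⟩
    have hAc : A *ᵥ (fun j : S => c j) = fun t : S => b t :=
      funext fun t => (sum_eq c t).symm.trans (hc t t.2)
    have hcv : (fun j : S => c j) = v := by
      rw [show v = A⁻¹ *ᵥ (A *ᵥ fun j : S => c j) by rw [hAc], mulVec_mulVec,
        nonsing_inv_mul _ h, one_mulVec]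
    funext d
    by_cases hd : d ∈ S
    · simp [dif_pos hd, ← hcv]
    · simp [hd, hc0]

section GcdMatrix

variable (R : Type*) [CommRing R] (S : Finset ℕ)

def gcdMatrix : Matrix S S R := of fun i j => (Nat.gcd i j : R)

def dvdMatrix : Matrix S S R := of fun i j => if (i : ℕ) ∣ j then 1 else 0

variable {S}

theorem zero_notMem_of_dvd_closed (hS : ∀ d ∈ S, ∀ e, e ∣ d → e ∈ S) : 0 ∉ S := fun h0 =>
  Set.infinite_univ (S.finite_toSet.subset fun e _ => hS 0 h0 e (dvd_zero e))

theorem gcd_eq_sum_totient_of_dvd_closed (hS : ∀ d ∈ S, ∀ e, e ∣ d → e ∈ S) {t : ℕ} (ht : t ∈ S)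
    (d : ℕ) : (Nat.gcd t d : R) = ∑ e ∈ S with e ∣ t ∧ e ∣ d, (e.totient : R) := by
  have hgcd : Nat.gcd t d ≠ 0 :=
    Nat.gcd_ne_zero_left (ne_of_mem_of_not_mem ht (zero_notMem_of_dvd_closed hS))
  have : {e ∈ S | e ∣ t ∧ e ∣ d} = (Nat.gcd t d).divisors := by
    ext e
    simp only [mem_filter, Nat.mem_divisors, ← Nat.dvd_gcd_iff, and_iff_left hgcd]
    exact ⟨And.right, fun he => ⟨hS t ht e (he.trans (Nat.gcd_dvd_left t d)), he⟩⟩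
  rw [this, ← Nat.cast_sum, Nat.sum_totient]

theorem gcdMatrix_eq_transpose_mul_diagonal_mul (hS : ∀ d ∈ S, ∀ e, e ∣ d → e ∈ S) :
    gcdMatrix R S =
      (dvdMatrix R S)ᵀ * diagonal (fun e : S => ((e : ℕ).totient : R)) * dvdMatrix R S := by
  ext t d
  rw [gcdMatrix, of_apply, gcd_eq_sum_totient_of_dvd_closed R hS t.2, sum_filter,
    ← sum_coe_sort S, mul_apply]
  refine sum_congr rfl fun e _ => ?_
  simp only [mul_diagonal, transpose_apply, dvdMatrix, of_apply]
  split_ifs <;> simp_all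

theorem dvdMatrix_isUpperTriangular (h0 : 0 ∉ S) : (dvdMatrix R S).IsUpperTriangular := by
  intro i j hji
  have hj : (j : ℕ) ≠ 0 := ne_of_mem_of_not_mem j.2 h0
  exact if_neg fun hij => (Nat.le_of_dvd (Nat.pos_of_ne_zero hj) hij).not_gt hji

theorem det_dvdMatrix (h0 : 0 ∉ S) : (dvdMatrix R S).det = 1 := by
  rw [det_of_isUpperTriangular (dvdMatrix_isUpperTriangular R h0)]
  simp [dvdMatrix]

theorem det_gcdMatrix (hS : ∀ d ∈ S, ∀ e, e ∣ d → e ∈ S) :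
    (gcdMatrix R S).det = ∏ e ∈ S, (e.totient : R) := by
  rw [gcdMatrix_eq_transpose_mul_diagonal_mul R hS, det_mul, det_mul, det_transpose,
    det_dvdMatrix R (zero_notMem_of_dvd_closed hS), det_diagonal, one_mul, mul_one]
  exact prod_coe_sort S fun e => (e.totient : R)

end GcdMatrix

/-- For a positive integer `n` there is a unique function `c_n` on the
divisors of `n` (encoded as a function `ℕ → ℚ` vanishing off the divisors) with
`∑_{d ∣ n} gcd(t,d) · c_n(d) = n / t` for every divisor `t` of `n`. -/
theorem exists_unique_cn (n : ℕ) (hn : 0 < n) :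
    ∃! c : ℕ → ℚ, (∀ d, d ∉ n.divisors → c d = 0) ∧
      ∀ t ∈ n.divisors, ∑ d ∈ n.divisors, (Nat.gcd t d : ℚ) * c d = (n : ℚ) / t := by
  have hS : ∀ d ∈ n.divisors, ∀ e, e ∣ d → e ∈ n.divisors := fun d hd e hed =>
    Nat.mem_divisors.2 ⟨hed.trans (Nat.dvd_of_mem_divisors hd), hn.ne'⟩
  refine existsUnique_sum_mul_eq_of_isUnit_det _ _ ?_
  change IsUnit (gcdMatrix ℚ n.divisors).det
  rw [det_gcdMatrix ℚ hS, isUnit_iff_ne_zero, prod_ne_zero_iff]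
  exact fun e he => Nat.cast_ne_zero.2 (Nat.totient_pos.2 (Nat.pos_of_mem_divisors he)).ne'
end

section
/- Let D > 24 be an integer and suppose a multiset of pairs (h_i, k_i) of positive integers (dual Coxeter numbers and levels of simple ideals g_i) satisfies h_i/k_i = (D−24)/24 for all i, together with (h_i)² < 4·dim(g_i) and ∑ dim(g_i) = D. Then D ≤ 1128. In particular, only finitely many values of D are possible. -/
/-!
A positive ratio `h / k = (D - 24) / 24` forces `k ≥ 1`, so `D - 24 ≤ 24 h` and
every simple ideal has `dim g ≤ D ≤ 24 (h + 1)`.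
Running through the classification, this quadratic-versus-linear inequality forces `h ≤ 46`,
whence `D ≤ 24 · 47 = 1128`.
-/

/-- The pairs `(d, h)` of dimension and dual Coxeter number of the finite-dimensional
simple complex Lie algebras: `A_l` (l ≥ 1), `B_l` (l ≥ 2), `C_l` (l ≥ 3), `D_l` (l ≥ 4),
`E₆`, `E₇`, `E₈`, `F₄`, `G₂`. -/
def IsSimpleLieDimCoxeter (d h : ℕ) : Prop :=
  (∃ l, 1 ≤ l ∧ d = l ^ 2 + 2 * l ∧ h = l + 1) ∨
  (∃ l, 2 ≤ l ∧ d = 2 * l ^ 2 + l ∧ h = 2 * l - 1) ∨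
  (∃ l, 3 ≤ l ∧ d = 2 * l ^ 2 + l ∧ h = l + 1) ∨
  (∃ l, 4 ≤ l ∧ d = 2 * l ^ 2 - l ∧ h = 2 * l - 2) ∨
  (d = 78 ∧ h = 12) ∨ (d = 133 ∧ h = 18) ∨ (d = 248 ∧ h = 30) ∨
  (d = 52 ∧ h = 9) ∨ (d = 14 ∧ h = 4)

theorem IsSimpleLieDimCoxeter.coxeter_le_of_dim_le {d h : ℕ} (hdh : IsSimpleLieDimCoxeter d h)
    (hle : d ≤ 24 * (h + 1)) : h ≤ 46 := by
  rcases hdh with ⟨l, hl, rfl, rfl⟩ | ⟨l, hl, rfl, rfl⟩ | ⟨l, hl, rfl, rfl⟩ | ⟨l, hl, rfl, rfl⟩ |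
    ⟨rfl, rfl⟩ | ⟨rfl, rfl⟩ | ⟨rfl, rfl⟩ | ⟨rfl, rfl⟩ | ⟨rfl, rfl⟩
  · nlinarith
  · have : 2 * l - 1 + 1 = 2 * l := by omega
    rw [this] at hle
    nlinarith
  · nlinarith
  · have : 2 * l - 2 + 1 = 2 * l - 1 := by omega
    rw [this] at hle
    zify [(by nlinarith : l ≤ 2 * l ^ 2), (by omega : 1 ≤ 2 * l), (by omega : 2 ≤ 2 * l)] at hle ⊢
    nlinarith
  all_goals omega

theorem le_natCast_of_natCast_div_natCast_eq {K : Type*} [Field K] [LinearOrder K]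
    [IsStrictOrderedRing K] {a b : ℕ} {q : K} (hq : 0 < q) (h : (a : K) / b = q) : q ≤ a := by
  rcases Nat.eq_zero_or_pos b with rfl | hb
  · simp only [Nat.cast_zero, div_zero] at h
    exact absurd h hq.ne
  · rw [← h]
    exact div_le_self a.cast_nonneg (by exact_mod_cast hb)

theorem dim_bound_1128_general (D : ℤ) (hD : 24 < D) (r : ℕ)
    (d h k : Fin r → ℕ)
    (hLie : ∀ i, IsSimpleLieDimCoxeter (d i) (h i))
    (hratio : ∀ i, (h i : ℚ) / (k i : ℚ) = ((D : ℚ) - 24) / 24)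
    (hsum : (∑ i, (d i : ℤ)) = D) :
    D ≤ 1128 := by
  obtain ⟨i, -, -⟩ := Finset.exists_ne_zero_of_sum_ne_zero (hsum.trans_ne (by omega))
  have hD_le : D ≤ 24 * (h i + 1) := by
    have hpos : (0 : ℚ) < ((D : ℚ) - 24) / 24 := by
      have : (24 : ℚ) < D := by exact_mod_cast hD
      linarith
    have := le_natCast_of_natCast_div_natCast_eq hpos (hratio i)
    have : (D : ℚ) ≤ 24 * (h i + 1) := by linarith
    exact_mod_cast this
  have hd_le : (d i : ℤ) ≤ D :=
    hsum ▸ Finset.single_le_sum (fun j _ => Int.natCast_nonneg (d j)) (Finset.mem_univ i)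
  have h46 := (hLie i).coxeter_le_of_dim_le (by omega)
  omega

/-- if `D > 24`, the simple ideals `g_i` (with dimensions `d i` and dual
Coxeter numbers `h i`) and levels `k i ∈ ℤ_{>0}` satisfy `h i / k i = (D-24)/24`,
`(h i)² < 4·dim g_i` and `∑ dim g_i = D`, then `D ≤ 1128`. -/
theorem dim_bound_1128 (D : ℤ) (hD : 24 < D) (r : ℕ) (hr : 1 ≤ r)
    (d h k : Fin r → ℕ) (hk : ∀ i, 0 < k i)
    (hLie : ∀ i, IsSimpleLieDimCoxeter (d i) (h i))
    (hratio : ∀ i, (h i : ℚ) / (k i : ℚ) = ((D : ℚ) - 24) / 24)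
    (hineq : ∀ i, (h i) ^ 2 < 4 * d i)
    (hsum : (∑ i, (d i : ℤ)) = D) :
    D ≤ 1128 :=
  dim_bound_1128_general D hD r d h k hLie hratio hsum
end

section
/- For the simple Lie algebra sl₂ (type A₁) with Cartan subalgebra h, the inner automorphism exp(ad_{2πi·ρ/h∨}) has order exactly 2, where ρ is the Weyl vector and h∨ = 2 is the dual Coxeter number; more generally, for a simply-laced simple Lie algebra g the automorphism exp(ad_{2πi·ρ/h∨}) has order exactly h∨. -/
open scoped RealInnerProductSpace BigOperators

/-- The root-system data of a finite-dimensional simple complex Lie algebra of rank `n`: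
an irreducible reduced crystallographic root system `Φ` in Euclidean space `ℝ^n`, with
the invariant bilinear form normalised so that long roots have squared norm `2`,
together with a system of positive roots `Pos` and the highest root `θ`. -/
structure IrreducibleRootSystemData (n : ℕ) where
  Φ : Finset (EuclideanSpace ℝ (Fin n))
  Pos : Finset (EuclideanSpace ℝ (Fin n))
  θ : EuclideanSpace ℝ (Fin n)
  nonempty : Φ.Nonempty
  zero_not_mem : (0 : EuclideanSpace ℝ (Fin n)) ∉ Φ
  span_eq_top : Submodule.span ℝ (Φ : Set (EuclideanSpace ℝ (Fin n))) = ⊤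
  neg_mem : ∀ α ∈ Φ, -α ∈ Φ
  reduced : ∀ α ∈ Φ, ∀ t : ℝ, t • α ∈ Φ → t = 1 ∨ t = -1
  integral : ∀ α ∈ Φ, ∀ β ∈ Φ, ∃ k : ℤ, 2 * ⟪β, α⟫ / ⟪α, α⟫ = (k : ℝ)
  reflect_mem : ∀ α ∈ Φ, ∀ β ∈ Φ, β - (2 * ⟪β, α⟫ / ⟪α, α⟫) • α ∈ Φ
  irreducible : ∀ Φ₁ Φ₂ : Finset (EuclideanSpace ℝ (Fin n)), Φ₁ ⊆ Φ → Φ₂ ⊆ Φ →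
    (∀ α ∈ Φ, α ∈ Φ₁ ∨ α ∈ Φ₂) → (∀ α ∈ Φ₁, ∀ β ∈ Φ₂, ⟪α, β⟫ = 0) → Φ₁ = ∅ ∨ Φ₂ = ∅
  norm_le_two : ∀ α ∈ Φ, ⟪α, α⟫ ≤ 2
  exists_long : ∃ α ∈ Φ, ⟪α, α⟫ = 2
  pos_subset : Pos ⊆ Φ
  pos_iff : ∀ α ∈ Φ, (α ∈ Pos ↔ -α ∉ Pos)
  pos_add : ∀ α ∈ Pos, ∀ β ∈ Pos, α + β ∈ Φ → α + β ∈ Pos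
  θ_mem : θ ∈ Pos
  θ_long : ⟪θ, θ⟫ = 2
  θ_highest : ∀ α ∈ Pos, θ + α ∉ Φ

namespace IrreducibleRootSystemData

variable {n : ℕ} (R : IrreducibleRootSystemData n)

/-- The Weyl vector `ρ`, the half sum of the positive roots. -/
noncomputable def weylVector : EuclideanSpace ℝ (Fin n) := ((1 : ℝ) / 2) • ∑ α ∈ R.Pos, α

/-- The dual Coxeter number `h∨ = 1 + (ρ, θ)` (here `θ∨ = θ` since `(θ,θ) = 2`). -/
noncomputable def dualCoxeter : ℝ := 1 + ⟪R.weylVector, R.θ⟫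

/-- The dimension of the Lie algebra: number of roots plus the rank. -/
def dimLie : ℕ := R.Φ.card + n

end IrreducibleRootSystemData

/-! On the root space `g_α` the automorphism acts by `exp (2πi (α, ρ) / h∨)`. In the
simply-laced case `(α, ρ) = ⟨ρ, α∨⟩`, and this is an integer for every root `α`: the map
`β ↦ ±s_α β`, with the sign chosen to land in the positive roots, is an involution of the
positive roots that changes `⟨β, α∨⟩` at most by a sign and whose fixed points (`β ⊥ α` or
`β = ±α`) have even pairing, so `⟨2ρ, α∨⟩ = ∑_{β > 0} ⟨β, α∨⟩` is even. Since `θ` is the highest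
root, `(θ, ρ) = h∨ - 1 ≥ 0`; hence every eigenvalue is an `h∨`-th root of unity and the one on
`g_θ` is primitive, because `h∨ - 1` is prime to `h∨`. -/

section Reflection

variable {E : Type*} [NormedAddCommGroup E] [InnerProductSpace ℝ E]

/-- The Cartan number `⟨β, α∨⟩`. -/
noncomputable def corootPairing (α β : E) : ℝ := 2 * ⟪β, α⟫ / ⟪α, α⟫

noncomputable def rootReflection (α β : E) : E := β - corootPairing α β • α

lemma corootPairing_neg (α β : E) : corootPairing α (-β) = -corootPairing α β := by
  simp only [corootPairing, inner_neg_left]; ring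

lemma corootPairing_of_inner_self {α : E} (hα : ⟪α, α⟫ = 2) (β : E) :
    corootPairing α β = ⟪β, α⟫ := by
  rw [corootPairing, hα]; ring

lemma rootReflection_neg (α β : E) : rootReflection α (-β) = -rootReflection α β := by
  rw [rootReflection, rootReflection, corootPairing_neg, neg_smul]; abel

variable {α : E}

lemma corootPairing_rootReflection (hα : α ≠ 0) (β : E) :
    corootPairing α (rootReflection α β) = -corootPairing α β := by
  have : ⟪α, α⟫ ≠ 0 := inner_self_ne_zero.mpr hα
  simp only [corootPairing, rootReflection, inner_sub_left, real_inner_smul_left]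
  field_simp
  ring

lemma rootReflection_rootReflection (hα : α ≠ 0) (β : E) :
    rootReflection α (rootReflection α β) = β := by
  conv_lhs => rw [rootReflection, corootPairing_rootReflection hα, neg_smul, sub_neg_eq_add]
  rw [rootReflection, sub_add_cancel]

lemma corootPairing_eq_zero_of_rootReflection_eq_self (hα : α ≠ 0) {β : E}
    (h : rootReflection α β = β) :
    corootPairing α β = 0 := by
  rw [rootReflection, sub_eq_self, smul_eq_zero] at h
  exact h.resolve_right hα

lemma eq_smul_of_rootReflection_eq_neg {β : E} (h : rootReflection α β = -β) :
    β = (corootPairing α β / 2) • α := by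
  rw [rootReflection] at h
  linear_combination (norm := module) (1 / 2 : ℝ) • h

end Reflection

namespace IrreducibleRootSystemData

variable {n : ℕ} (R : IrreducibleRootSystemData n) {α β : EuclideanSpace ℝ (Fin n)}

lemma ne_zero_of_mem (hα : α ∈ R.Φ) : α ≠ 0 :=
  fun h => R.zero_not_mem (h ▸ hα)

lemma neg_notMem_pos (hβ : β ∈ R.Pos) : -β ∉ R.Pos :=
  (R.pos_iff β (R.pos_subset hβ)).mp hβ

open Classical in
noncomputable def toPos (γ : EuclideanSpace ℝ (Fin n)) : EuclideanSpace ℝ (Fin n) :=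
  if γ ∈ R.Pos then γ else -γ

lemma toPos_eq_or (γ : EuclideanSpace ℝ (Fin n)) : R.toPos γ = γ ∨ R.toPos γ = -γ := by
  unfold toPos; split_ifs <;> simp

lemma toPos_mem {γ : EuclideanSpace ℝ (Fin n)} (hγ : γ ∈ R.Φ) : R.toPos γ ∈ R.Pos := by
  unfold toPos
  split_ifs with h
  · exact h
  · exact not_not.mp (mt (R.pos_iff γ hγ).mpr h)

lemma toPos_of_mem_pos (hβ : β ∈ R.Pos) : R.toPos β = β := if_pos hβ

lemma toPos_neg_of_mem_pos (hβ : β ∈ R.Pos) : R.toPos (-β) = β := by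
  rw [toPos, if_neg (R.neg_notMem_pos hβ), neg_neg]

noncomputable def reflectPos (α β : EuclideanSpace ℝ (Fin n)) : EuclideanSpace ℝ (Fin n) :=
  R.toPos (rootReflection α β)

lemma reflectPos_mem (hα : α ∈ R.Φ) (hβ : β ∈ R.Pos) : R.reflectPos α β ∈ R.Pos :=
  R.toPos_mem (R.reflect_mem α hα β (R.pos_subset hβ))

lemma reflectPos_reflectPos (hα : α ∈ R.Φ) (hβ : β ∈ R.Pos) :
    R.reflectPos α (R.reflectPos α β) = β := by
  have hs := rootReflection_rootReflection (R.ne_zero_of_mem hα) β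
  rcases R.toPos_eq_or (rootReflection α β) with h | h <;>
    simp only [reflectPos, h, rootReflection_neg, hs, R.toPos_of_mem_pos hβ,
      R.toPos_neg_of_mem_pos hβ]

lemma corootPairing_reflectPos (hα : α ∈ R.Φ) (β : EuclideanSpace ℝ (Fin n)) :
    corootPairing α (R.reflectPos α β) = corootPairing α β ∨
      corootPairing α (R.reflectPos α β) = -corootPairing α β := by
  have hs := corootPairing_rootReflection (R.ne_zero_of_mem hα) β
  rcases R.toPos_eq_or (rootReflection α β) with h | h
  · right; rw [reflectPos, h, hs]
  · left; rw [reflectPos, h, corootPairing_neg, hs, neg_neg]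

lemma corootPairing_of_reflectPos_eq_self (hα : α ∈ R.Φ) (hβ : β ∈ R.Pos)
    (h : R.reflectPos α β = β) :
    corootPairing α β = 0 ∨ corootPairing α β = 2 ∨ corootPairing α β = -2 := by
  rw [reflectPos] at h
  rcases R.toPos_eq_or (rootReflection α β) with h' | h'
  · exact .inl (corootPairing_eq_zero_of_rootReflection_eq_self (R.ne_zero_of_mem hα)
      (h'.symm.trans h))
  · have hβα := eq_smul_of_rootReflection_eq_neg (neg_eq_iff_eq_neg.mp (h'.symm.trans h))
    have hβΦ := R.pos_subset hβ
    rcases R.reduced α hα _ (hβα ▸ hβΦ) with h2 | h2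
    · right; left; linarith
    · right; right; linarith

lemma corootPairing_weylVector (α : EuclideanSpace ℝ (Fin n)) :
    corootPairing α R.weylVector = (1 / 2) * ∑ β ∈ R.Pos, corootPairing α β := by
  simp only [corootPairing, weylVector, real_inner_smul_left, sum_inner, ← Finset.sum_div,
    ← Finset.mul_sum]
  ring

theorem exists_int_corootPairing_weylVector (hα : α ∈ R.Φ) :
    ∃ k : ℤ, corootPairing α R.weylVector = k := by
  let f : EuclideanSpace ℝ (Fin n) → ℤ := fun β => round (corootPairing α β)
  have hf : ∀ β ∈ R.Pos, (f β : ℝ) = corootPairing α β := by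
    intro β hβ
    obtain ⟨k, hk⟩ := R.integral α hα β (R.pos_subset hβ)
    simp only [f, corootPairing, hk, round_intCast]
  have heven : Even (∑ β ∈ R.Pos, f β) := by
    rw [← ZMod.intCast_eq_zero_iff_even, Int.cast_sum]
    refine Finset.sum_involution (fun β _ => R.reflectPos α β) (fun β hβ => ?_)
      (fun β hβ hne heq => hne ?_) (fun β hβ => R.reflectPos_mem hα hβ)
      (fun β hβ => R.reflectPos_reflectPos hα hβ)
    · have hfσ : f (R.reflectPos α β) = f β ∨ f (R.reflectPos α β) = -f β := by
        have h := R.corootPairing_reflectPos hα β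
        rw [← hf _ hβ, ← hf _ (R.reflectPos_mem hα hβ)] at h
        exact_mod_cast h
      rcases hfσ with h | h <;> simp [h, ZMod.neg_eq_self_mod_two, CharTwo.add_self_eq_zero]
    · rw [ZMod.intCast_eq_zero_iff_even]
      have hfix := R.corootPairing_of_reflectPos_eq_self hα hβ heq
      rw [← hf _ hβ] at hfix
      have hfβ : f β = 0 ∨ f β = 2 ∨ f β = -2 := by exact_mod_cast hfix
      rcases hfβ with h | h | h <;> simp [h]
  obtain ⟨t, ht⟩ := heven
  refine ⟨t, ?_⟩
  rw [corootPairing_weylVector, ← Finset.sum_congr rfl hf, ← Int.cast_sum, ht]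
  push_cast
  ring

def IsSimplyLaced : Prop := ∀ α ∈ R.Φ, ⟪α, α⟫ = 2

variable {R}

lemma IsSimplyLaced.exists_int_inner_weylVector (hR : R.IsSimplyLaced) (hα : α ∈ R.Φ) :
    ∃ k : ℤ, ⟪α, R.weylVector⟫ = k := by
  obtain ⟨k, hk⟩ := R.exists_int_corootPairing_weylVector hα
  exact ⟨k, by rw [real_inner_comm, ← corootPairing_of_inner_self (hR α hα), hk]⟩

/-- Otherwise `⟪β, θ⟫ ∈ {-1, -2}`, and then either `s_β θ = θ + β` is a root or `β = -θ`. -/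
lemma IsSimplyLaced.inner_theta_nonneg (hR : R.IsSimplyLaced) (hβ : β ∈ R.Pos) :
    0 ≤ ⟪β, R.θ⟫ := by
  have hβΦ := R.pos_subset hβ
  have hθΦ := R.pos_subset R.θ_mem
  obtain ⟨k, hk⟩ := R.integral β hβΦ R.θ hθΦ
  rw [← corootPairing, corootPairing_of_inner_self (hR β hβΦ)] at hk
  have hsq : ⟪R.θ + β, R.θ + β⟫ = 4 + 2 * k := by
    rw [inner_add_left, inner_add_right, inner_add_right, R.θ_long, hR β hβΦ,
      real_inner_comm R.θ β, hk]
    ring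
  by_contra! hneg
  have hk' : k = -1 ∨ k = -2 := by
    have h1 : (k : ℝ) < 0 := by rwa [← hk, real_inner_comm]
    have h2 : (-2 : ℝ) ≤ k := by linarith [real_inner_self_nonneg (x := R.θ + β)]
    have h1' : k < 0 := by exact_mod_cast h1
    have h2' : -2 ≤ k := by exact_mod_cast h2
    omega
  rcases hk' with rfl | rfl
  · have h := R.reflect_mem β hβΦ R.θ hθΦ
    rw [← corootPairing, corootPairing_of_inner_self (hR β hβΦ), hk] at h
    exact R.θ_highest β hβ (by simpa using h)
  · have h : R.θ + β = 0 := inner_self_eq_zero.mp (by rw [hsq]; norm_num)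
    exact R.neg_notMem_pos R.θ_mem (eq_neg_of_add_eq_zero_right h ▸ hβ)

lemma IsSimplyLaced.exists_nat_inner_theta_weylVector (hR : R.IsSimplyLaced) :
    ∃ m : ℕ, ⟪R.θ, R.weylVector⟫ = m := by
  obtain ⟨k, hk⟩ := hR.exists_int_inner_weylVector (R.pos_subset R.θ_mem)
  have hnonneg : 0 ≤ ⟪R.θ, R.weylVector⟫ := by
    rw [weylVector, real_inner_smul_right, inner_sum]
    exact mul_nonneg (by norm_num) (Finset.sum_nonneg fun β hβ =>
      real_inner_comm β R.θ ▸ hR.inner_theta_nonneg hβ)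
  lift k to ℕ using (by exact_mod_cast hk ▸ hnonneg)
  exact ⟨k, hk⟩

end IrreducibleRootSystemData

open Complex in
theorem Complex.exp_two_pi_I_mul_div_pow_eq_one_iff (k : ℤ) {p : ℕ} (hp : p ≠ 0) (N : ℕ) :
    exp (2 * Real.pi * I * (((k / p : ℝ)) : ℂ)) ^ N = 1 ↔ (p : ℤ) ∣ k * N := by
  have hexp : exp (2 * Real.pi * I * (((k / p : ℝ)) : ℂ)) = exp (2 * Real.pi * I / p) ^ k := by
    rw [← exp_int_mul]; push_cast; ring_nf
  rw [hexp, ← zpow_natCast, ← zpow_mul]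
  exact (isPrimitiveRoot_exp p hp).zpow_eq_one_iff_dvd _

/-- for a simply-laced simple Lie algebra `g`, the inner automorphism
`exp(ad_{2πi·ρ/h∨})` has order exactly `h∨`. It acts trivially on the Cartan subalgebra
and on each root space `g_α` by the scalar `e^{2πi(α,ρ)/h∨}`, so its order is the least
positive `N` with `(e^{2πi(α,ρ)/h∨})^N = 1` for all roots `α`; this least `N` is `h∨`.
(For `sl₂ = A₁` this gives order exactly `2 = h∨`.) -/
theorem order_of_exp_ad_weyl (n : ℕ) (R : IrreducibleRootSystemData n)
    (hsl : ∀ α ∈ R.Φ, ⟪α, α⟫ = 2) :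
    ∃ p : ℕ, (p : ℝ) = R.dualCoxeter ∧
      IsLeast {N : ℕ | 0 < N ∧ ∀ α ∈ R.Φ,
        (Complex.exp (2 * Real.pi * Complex.I *
          ((⟪α, R.weylVector⟫ / R.dualCoxeter : ℝ) : ℂ))) ^ N = 1} p := by
  have hR : R.IsSimplyLaced := hsl
  obtain ⟨m, hm⟩ := hR.exists_nat_inner_theta_weylVector
  have hh : R.dualCoxeter = ((m + 1 : ℕ) : ℝ) := by
    rw [IrreducibleRootSystemData.dualCoxeter, real_inner_comm, hm]; push_cast; ring
  refine ⟨m + 1, hh.symm, ⟨m.succ_pos, fun α hα => ?_⟩, fun N ⟨hN, hNθ⟩ => ?_⟩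
  · obtain ⟨k, hk⟩ := hR.exists_int_inner_weylVector hα
    rw [hk, hh, Complex.exp_two_pi_I_mul_div_pow_eq_one_iff k m.succ_ne_zero]
    exact dvd_mul_left _ _
  · have h := hNθ R.θ (R.pos_subset R.θ_mem)
    rw [hm, hh, ← Int.cast_natCast m,
      Complex.exp_two_pi_I_mul_div_pow_eq_one_iff _ m.succ_ne_zero] at h
    have hcop : Nat.Coprime (m + 1) m := by simp
    exact Nat.le_of_dvd hN (hcop.dvd_of_dvd_mul_left (by exact_mod_cast h))
end

section
/- Let g be a finite-order automorphism of a finite-dimensional complex vector space V with rational characteristic polynomial of order m. Then there exist integers b_t (t ∣ m) such that the characteristic polynomial of g equals ∏_{t∣m}(x^t − 1)^{b_t}. -/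
/-!
Every eigenvalue of `g` is an `m`-th root of unity, so the characteristic polynomial divides a
power of `X ^ m - 1`. Having rational coefficients, it is the image of a monic divisor of
`(X ^ m - 1) ^ n` in `ℚ[X]`, hence a product of powers of the cyclotomic polynomials `Φ_d`,
`d ∣ m`, which are irreducible over `ℚ`. Möbius inversion of `X ^ d - 1 = ∏_{t ∣ d} Φ_t`
gives `Φ_d = ∏_{t ∣ d} (X ^ t - 1) ^ μ(d / t)`, and products of such expressions
are again of the form `∏_{t ∣ m} (X ^ t - 1) ^ b_t`.
-/

open Polynomial
open scoped ArithmeticFunction.Moebius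

theorem Module.End.pow_eq_one_of_isRoot_charpoly {R M : Type*} [CommRing R] [IsDomain R]
    [AddCommGroup M] [Module R M] [Module.Free R M] [Module.Finite R M]
    {f : Module.End R M} {m : ℕ} (hf : f ^ m = 1) {c : R} (hc : f.charpoly.IsRoot c) :
    c ^ m = 1 := by
  obtain ⟨v, hv⟩ := ((hasEigenvalue_iff_isRoot_charpoly f c).2 hc).exists_hasEigenvector
  have hvm : c ^ m • v = (1 : R) • v := by rw [← hv.pow_apply m, hf, one_apply, one_smul]
  exact smul_left_injective R hv.2 hvm

theorem Polynomial.dvd_pow_natDegree_of_forall_isRoot {K : Type*} [Field K] [IsAlgClosed K]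
    {p q : K[X]} (hp : p.Monic) (h : ∀ a, p.IsRoot a → q.IsRoot a) : p ∣ q ^ p.natDegree := by
  have hprod := (IsAlgClosed.splits p).eq_prod_roots_of_monic hp
  have hdvd := Multiset.prod_dvd_prod_of_dvd (S := p.roots) (fun a => X - C a) (fun _ => q)
    fun a ha => dvd_iff_isRoot.2 (h a (isRoot_of_mem_roots ha))
  rwa [← hprod, Multiset.map_const', Multiset.prod_replicate,
    IsAlgClosed.card_roots_eq_natDegree] at hdvd

theorem exists_associated_prod_pow_of_dvd_prod_pow {α ι : Type*} [CommMonoidWithZero α]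
    [IsCancelMulZero α] [DecompositionMonoid α] {s : Finset ι} {q : ι → α}
    (hq : ∀ i ∈ s, Prime (q i)) (n : ι → ℕ) {p : α} (hp : p ∣ ∏ i ∈ s, q i ^ n i) :
    ∃ a : ι → ℕ, Associated p (∏ i ∈ s, q i ^ a i) := by
  classical
  induction s using Finset.induction_on generalizing p with
  | empty => exact ⟨0, by simpa [associated_one_iff_isUnit] using isUnit_of_dvd_one hp⟩
  | insert j s hj ih =>
    rw [Finset.prod_insert hj] at hp
    obtain ⟨p₁, p₂, h₁, h₂, rfl⟩ := exists_dvd_and_dvd_of_dvd_mul hp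
    obtain ⟨k, -, hk⟩ := (dvd_prime_pow (hq j (Finset.mem_insert_self j s)) _).1 h₁
    obtain ⟨a, ha⟩ := ih (fun i hi => hq i (Finset.mem_insert_of_mem hi)) h₂
    refine ⟨Function.update a j k, ?_⟩
    rw [Finset.prod_insert hj, Function.update_self, Finset.prod_congr rfl fun i hi => by
      rw [Function.update_of_ne (ne_of_mem_of_not_mem hi hj)]]
    exact hk.mul_mul ha

theorem Polynomial.exists_eq_prod_cyclotomic_pow_of_dvd {m n : ℕ} (hm : 0 < m) {p : ℚ[X]}
    (hp : p.Monic) (hdvd : p ∣ (X ^ m - 1) ^ n) :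
    ∃ a : ℕ → ℕ, p = ∏ d ∈ m.divisors, cyclotomic d ℚ ^ a d := by
  rw [← prod_cyclotomic_eq_X_pow_sub_one hm, ← Finset.prod_pow] at hdvd
  obtain ⟨a, ha⟩ := exists_associated_prod_pow_of_dvd_prod_pow
    (fun d hd => (cyclotomic.irreducible_rat (Nat.pos_of_mem_divisors hd)).prime) _ hdvd
  exact ⟨a, eq_of_monic_of_associated hp
    (monic_prod_of_monic _ _ fun d _ => (cyclotomic.monic d ℚ).pow _) ha⟩

theorem RatFunc.X_pow_sub_one_ne_zero {K : Type*} [Field K] {t : ℕ} (ht : t ≠ 0) :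
    (RatFunc.X : RatFunc K) ^ t - 1 ≠ 0 := by
  have := X_pow_sub_C_ne_zero (Nat.pos_of_ne_zero ht) (1 : K)
  rw [map_one] at this
  simpa [← RatFunc.algebraMap_X] using
    (map_ne_zero_iff _ (RatFunc.algebraMap_injective K)).2 this

def cycleShapes (K : Type*) [Field K] (m : ℕ) : Submonoid (RatFunc K) where
  carrier := {f | ∃ b : ℕ → ℤ, f = ∏ t ∈ m.divisors, (RatFunc.X ^ t - 1) ^ b t}
  one_mem' := ⟨0, by simp⟩
  mul_mem' := by
    rintro _ _ ⟨b, rfl⟩ ⟨b', rfl⟩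
    refine ⟨b + b', ?_⟩
    rw [← Finset.prod_mul_distrib]
    exact Finset.prod_congr rfl fun t ht =>
      (zpow_add₀ (RatFunc.X_pow_sub_one_ne_zero (Nat.pos_of_mem_divisors ht).ne') _ _).symm

theorem algebraMap_cyclotomic_mem_cycleShapes {K : Type*} [Field K] {d m : ℕ}
    (hd : d ∈ m.divisors) : algebraMap K[X] (RatFunc K) (cyclotomic d K) ∈ cycleShapes K m := by
  obtain ⟨hdm, hm⟩ := Nat.mem_divisors.1 hd
  refine ⟨fun t => if t ∣ d then μ (d / t) else 0, ?_⟩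
  calc _ = ∏ t ∈ d.divisors, (RatFunc.X ^ t - 1 : RatFunc K) ^ μ (d / t) := by
        rw [cyclotomic_eq_prod_X_pow_sub_one_pow_moebius,
          Nat.prod_divisorsAntidiagonal' fun i j => algebraMap K[X] (RatFunc K) (X ^ j - 1) ^ μ i]
        simp [RatFunc.algebraMap_X]
    _ = ∏ t ∈ d.divisors,
          (RatFunc.X ^ t - 1 : RatFunc K) ^ (if t ∣ d then μ (d / t) else 0) :=
        Finset.prod_congr rfl fun t ht => by rw [if_pos (Nat.dvd_of_mem_divisors ht)]
    _ = _ := Finset.prod_subset (Nat.divisors_subset_of_dvd hm hdm) fun t _ ht => by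
        rw [if_neg fun htd => ht (Nat.mem_divisors.2 ⟨htd, ne_zero_of_dvd_ne_zero hm hdm⟩),
          zpow_zero]

theorem exists_cycle_shape_of_rational_charpoly_general
    (V : Type*) [AddCommGroup V] [Module ℂ V] [FiniteDimensional ℂ V]
    (g : V ≃ₗ[ℂ] V) (m : ℕ) (hm : 0 < m) (hgm : g ^ m = 1)
    (hrat : ∀ i : ℕ, ∃ q : ℚ, (LinearMap.charpoly g.toLinearMap).coeff i = (q : ℂ)) :
    ∃ b : ℕ → ℤ,
      algebraMap (Polynomial ℂ) (RatFunc ℂ) (LinearMap.charpoly g.toLinearMap) =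
        ∏ t ∈ m.divisors, ((RatFunc.X : RatFunc ℂ) ^ t - 1) ^ (b t) := by
  set χ := LinearMap.charpoly g.toLinearMap
  have hpow : g.toLinearMap ^ m = 1 := by
    rw [← LinearEquiv.automorphismGroup.toLinearMapMonoidHom_apply, ← map_pow, hgm, map_one]
  have hdvd : χ ∣ (X ^ m - 1) ^ χ.natDegree :=
    dvd_pow_natDegree_of_forall_isRoot (LinearMap.charpoly_monic _) fun a ha => by
      simpa [sub_eq_zero] using Module.End.pow_eq_one_of_isRoot_charpoly hpow ha
  obtain ⟨p, hpχ, -, hp⟩ := lifts_and_degree_eq_and_monic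
    ((lifts_iff_coeff_lifts χ).2 fun i => (hrat i).imp fun q hq => by simp [hq])
    (LinearMap.charpoly_monic _)
  obtain ⟨a, rfl⟩ := exists_eq_prod_cyclotomic_pow_of_dvd hm hp (n := χ.natDegree) <| by
    rwa [← map_dvd_map' (algebraMap ℚ ℂ), hpχ, Polynomial.map_pow, Polynomial.map_sub,
      Polynomial.map_pow, map_X, Polynomial.map_one]
  show algebraMap ℂ[X] (RatFunc ℂ) χ ∈ cycleShapes ℂ m
  rw [← hpχ, Polynomial.map_prod, map_prod]
  exact Submonoid.prod_mem _ fun d hd => by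
    rw [Polynomial.map_pow, map_cyclotomic, map_pow]
    exact pow_mem (algebraMap_cyclotomic_mem_cycleShapes hd) _

/-- a finite-order automorphism `g` of order `m` of a finite-dimensional
complex vector space whose characteristic polynomial has rational coefficients has a
cycle shape: there are integers `b_t` (`t ∣ m`) with characteristic polynomial
`∏_{t ∣ m}(x^t - 1)^{b_t}` (an identity of rational functions, negative `b_t` allowed). -/
theorem exists_cycle_shape_of_rational_charpoly
    (V : Type*) [AddCommGroup V] [Module ℂ V] [FiniteDimensional ℂ V]
    (g : V ≃ₗ[ℂ] V) (m : ℕ) (hm : 0 < m) (hgm : g ^ m = 1)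
    (hmin : ∀ k : ℕ, 0 < k → k < m → g ^ k ≠ 1)
    (hrat : ∀ i : ℕ, ∃ q : ℚ, (LinearMap.charpoly g.toLinearMap).coeff i = (q : ℂ)) :
    ∃ b : ℕ → ℤ,
      algebraMap (Polynomial ℂ) (RatFunc ℂ) (LinearMap.charpoly g.toLinearMap) =
        ∏ t ∈ m.divisors, ((RatFunc.X : RatFunc ℂ) ^ t - 1) ^ (b t) :=
  exists_cycle_shape_of_rational_charpoly_general V g m hm hgm hrat
end
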